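/- arXiv:1209.6621 — 2 statements merged into one kernel-verified Lean document; each statement's English description precedes it below -/
import Mathlib

section
/- Explicit column sums of SU(2) fusion matrices for A_r: let r ≥ 1, N = r+1, G the r×r adjacency matrix of the path graph (G_{ab}=1 iff |a−b|=1), F_0 = 0, F_1 = I, F_{n+1} = F_n·G − F_{n−1}, and λ_{n,b} = ∑_{a=1}^{r} (F_n + F_{n−1})_{a,b}. Then for every n with 1 ≤ n and 2n ≤ N, and every b with 1 ≤ b ≤ N−1: λ_{n,b} = 2b if b ≤ n−1; λ_{n,b} = 2n−1 if n ≤ b ≤ N−n; and λ_{n,b} = 2(N−b) if b ≥ N−n+1. -/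
open Finset

/-- Adjacency matrix of the Dynkin diagram `A_r` (path graph on `r` vertices). -/
def pathG (r : ℕ) : Matrix (Fin r) (Fin r) ℤ :=
  Matrix.of fun a b => if (a : ℕ) + 1 = (b : ℕ) ∨ (b : ℕ) + 1 = (a : ℕ) then 1 else 0

/-- The `SU(2)` fusion matrices for `A_r`: `F_0 = 0`, `F_1 = I`,
`F_{n+1} = F_n·G − F_{n−1}`. -/
def fusF (r : ℕ) : ℕ → Matrix (Fin r) (Fin r) ℤ
  | 0 => 0
  | 1 => 1
  | n + 2 => fusF r (n + 1) * pathG r - fusF r n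

/-!
The column sums `s_n = 1ᵀ F_n` satisfy `s_{n+2} = s_{n+1} G - s_n`, and right multiplication
by `G` sends a vector to the sum of its two neighbours, with zeros beyond the ends of the path.
On the 0-based vertices `j`, the trapezoid `t_n(j) = min (j + 1) (min n (r - j))` vanishes at
`j = -1` and `j = r`, so it supplies those zeros itself, and while `2 n ≤ r + 1` its two slopes
never meet, so `t_n` obeys the same recurrence. Hence `s_n = t_n`, and `λ_n = t_n + t_{n-1}`
is read off piecewise.
-/

open Matrix

lemma Fin.sum_ite_intCast_eq {M : Type*} [AddCommMonoid M] {r : ℕ} (g : ℤ → M) {j : ℤ}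
    (hg : j < 0 ∨ r ≤ j → g j = 0) :
    ∑ c : Fin r, (if (c : ℤ) = j then g c else 0) = g j := by
  by_cases hj : 0 ≤ j ∧ j < r
  · lift j to ℕ using hj.1
    have hcast (c : Fin r) : (c : ℤ) = j ↔ c = ⟨j, by omega⟩ := by simp [Fin.ext_iff]
    simp only [hcast, Finset.sum_ite_eq', Finset.mem_univ, if_true]
  · rw [hg (by omega)]
    exact sum_eq_zero fun c _ => if_neg (by omega)

lemma pathG_apply (r : ℕ) (c b : Fin r) :
    pathG r c b = (if (c : ℤ) = b - 1 then 1 else 0) + (if (c : ℤ) = b + 1 then 1 else 0) := by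
  simp only [pathG, Matrix.of_apply]
  split_ifs <;> omega

lemma vecMul_pathG_apply {r : ℕ} (g : ℤ → ℤ) (hg₀ : g (-1) = 0) (hgr : g r = 0)
    (b : Fin r) :
    ((fun c : Fin r => g c) ᵥ* pathG r) b = g (b - 1) + g (b + 1) := by
  simp only [vecMul, dotProduct, pathG_apply, mul_add, mul_ite, mul_one, mul_zero,
    sum_add_distrib]
  rw [Fin.sum_ite_intCast_eq g, Fin.sum_ite_intCast_eq g]
  · intro h
    convert hgr
    omega
  · intro h
    convert hg₀
    omega

lemma one_vecMul_apply {α m n : Type*} [NonAssocSemiring α] [Fintype m] (M : Matrix m n α)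
    (b : n) :
    (1 ᵥ* M) b = ∑ a, M a b := by
  simp [vecMul, dotProduct]

lemma one_vecMul_fusF_add_two (r n : ℕ) :
    1 ᵥ* fusF r (n + 2) = (1 ᵥ* fusF r (n + 1)) ᵥ* pathG r - 1 ᵥ* fusF r n := by
  rw [fusF, vecMul_sub, vecMul_vecMul]

def trapezoid (r n : ℕ) (j : ℤ) : ℤ := min (j + 1) (min n (r - j))

lemma trapezoid_add_two {r n : ℕ} (hn : 2 * (n + 2) ≤ r + 1) (j : ℤ) :
    trapezoid r (n + 2) j =
      trapezoid r (n + 1) (j - 1) + trapezoid r (n + 1) (j + 1) - trapezoid r n j := by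
  simp only [trapezoid]
  omega

theorem one_vecMul_fusF (r : ℕ) :
    ∀ n, 2 * n ≤ r + 1 → 1 ᵥ* fusF r n = fun b : Fin r => trapezoid r n b
  | 0, _ => by ext b; simp only [fusF, vecMul_zero, Pi.zero_apply, trapezoid]; omega
  | 1, _ => by ext b; simp only [fusF, vecMul_one, Pi.one_apply, trapezoid]; omega
  | n + 2, hn => by
    ext b
    rw [one_vecMul_fusF_add_two, one_vecMul_fusF r (n + 1) (by omega),
      one_vecMul_fusF r n (by omega), Pi.sub_apply, vecMul_pathG_apply, trapezoid_add_two hn]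
    all_goals simp only [trapezoid]; omega

/-- Vertices are 0-based: the paper's `b` is `(b : ℕ) + 1`, and `N = r + 1`. -/
theorem fusion_columnSums_Ar_general (r : ℕ) (n : ℕ) (hn : 1 ≤ n)
    (hn2 : 2 * n ≤ r + 1) (b : Fin r) :
    (((b : ℕ) + 1 ≤ n - 1 →
        (∑ a : Fin r, (fusF r n + fusF r (n - 1)) a b) = 2 * ((b : ℕ) + 1)) ∧
     (n ≤ (b : ℕ) + 1 ∧ (b : ℕ) + 1 ≤ (r + 1) - n →
        (∑ a : Fin r, (fusF r n + fusF r (n - 1)) a b) = 2 * (n : ℤ) - 1) ∧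
     ((r + 1) - n + 1 ≤ (b : ℕ) + 1 →
        (∑ a : Fin r, (fusF r n + fusF r (n - 1)) a b)
          = 2 * (((r + 1) - ((b : ℕ) + 1) : ℕ) : ℤ))) := by
  have hcol : ∑ a : Fin r, (fusF r n + fusF r (n - 1)) a b
      = trapezoid r n b + trapezoid r (n - 1) b := by
    rw [← one_vecMul_apply, vecMul_add, Pi.add_apply, one_vecMul_fusF r n hn2,
      one_vecMul_fusF r (n - 1) (by omega)]
  simp only [hcol, trapezoid]
  omega

/-- Explicit column sums of the `SU(2)` fusion matrices for `A_r`: with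
`N = r+1`, `λ_{n,b} = ∑_a (F_n + F_{n−1})_{a,b}`, for `1 ≤ n`, `2n ≤ N` and
`1 ≤ b ≤ N−1` (here `b` is the `1`-based index `(b:ℕ)+1` of a vertex
`b : Fin r`): `λ_{n,b} = 2b` if `b ≤ n−1`; `λ_{n,b} = 2n−1` if
`n ≤ b ≤ N−n`; and `λ_{n,b} = 2(N−b)` if `b ≥ N−n+1`. -/
theorem fusion_columnSums_Ar (r : ℕ) (hr : 1 ≤ r) (n : ℕ) (hn : 1 ≤ n)
    (hn2 : 2 * n ≤ r + 1) (b : Fin r) :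
    (((b : ℕ) + 1 ≤ n - 1 →
        (∑ a : Fin r, (fusF r n + fusF r (n - 1)) a b) = 2 * ((b : ℕ) + 1)) ∧
     (n ≤ (b : ℕ) + 1 ∧ (b : ℕ) + 1 ≤ (r + 1) - n →
        (∑ a : Fin r, (fusF r n + fusF r (n - 1)) a b) = 2 * (n : ℤ) - 1) ∧
     ((r + 1) - n + 1 ≤ (b : ℕ) + 1 →
        (∑ a : Fin r, (fusF r n + fusF r (n - 1)) a b)
          = 2 * (((r + 1) - ((b : ℕ) + 1) : ℕ) : ℤ))) :=
  fusion_columnSums_Ar_general r n hn hn2 b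
end

section
/- Path matrix identity for A_r: let r ≥ 1, let G be the r×r adjacency matrix of the path graph on r vertices, define F_0 = 0, F_1 = I, F_{n+1} = F_n·G − F_{n−1}, and set X = ∑_{n=1}^{r} F_n. Let X↻ be the matrix obtained from X by cyclically permuting its rows: (X↻)_{1,n} = X_{r,n} and (X↻)_{m,n} = X_{m−1,n} for m ≥ 2. Then ∏_{m=1}^{r} ∏_{n=1}^{r} (X + X↻)_{m,n} = 2^r · sf(r)², where sf(r) = ∏_{s=1}^{r} s!. -/
/-!
The fusion matrices obey the truncated Clebsch–Gordan rule: with `0`-based indices,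
`(F_n)_{ab} = 1` exactly when `|a - b| < n ≤ min (a + b + 1) (2r - 1 - a - b)` and `a + b + n` is
odd, and `0` otherwise; this is checked entrywise against the recurrence. Summing over `n` gives
`X_{ab} = min (a + 1, b + 1, r - a, r - b)`. So the first row of `X + X↻` is constantly `2`, while
for `m ≥ 1` its `(m, n)` entry is `min (2n + 2, 2(r - n), 2m + 1, 2(r - m) + 1)`. On these rows
each value `t ∈ [2, r]` occurs exactly `2 (r + 1 - t)` times, and `∏ t ^ (2 (r + 1 - t)) = sf(r)²`.
-/

open Finset

open Nat

def fusionEntry (r n a b : ℕ) : ℤ :=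
  if b < a + n ∧ a < b + n ∧ n ≤ a + b + 1 ∧ a + b + n ≤ 2 * r - 1 ∧ (a + b + n) % 2 = 1
  then 1 else 0

lemma fusionEntry_add_two {r n a b : ℕ} (hn : n + 2 ≤ r) (hb : b < r) :
    fusionEntry r (n + 2) a b =
      (if b + 1 < r then fusionEntry r (n + 1) a (b + 1) else 0) +
        (if 0 < b then fusionEntry r (n + 1) a (b - 1) else 0) - fusionEntry r n a b := by
  unfold fusionEntry
  split_ifs <;> omega

lemma mul_pathG_apply_of_row_eq {r : ℕ} {M : Matrix (Fin r) (Fin r) ℤ} {a : Fin r}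
    {f : ℕ → ℤ} (hf : ∀ k : Fin r, M a k = f k) (b : Fin r) :
    (M * pathG r) a b =
      (if (b : ℕ) + 1 < r then f (b + 1) else 0) + (if 0 < (b : ℕ) then f (b - 1) else 0) := by
  have hterm : ∀ k : ℕ, f k * (if k + 1 = b ∨ (b : ℕ) + 1 = k then 1 else 0) =
      (if k = b + 1 then f k else 0) +
        (if k = b - 1 then if 0 < (b : ℕ) then f k else 0 else 0) := by
    intro k
    split_ifs <;> omega
  simp only [Matrix.mul_apply, hf, pathG, Matrix.of_apply]
  rw [Fin.sum_univ_eq_sum_range (fun k => f k * if k + 1 = b ∨ (b : ℕ) + 1 = k then 1 else 0)]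
  simp only [hterm, sum_add_distrib, sum_ite_eq', mem_range]
  rw [if_pos (by omega : (b : ℕ) - 1 < r)]

theorem fusF_apply {r : ℕ} : ∀ n ≤ r, ∀ a b : Fin r, fusF r n a b = fusionEntry r n a b
  | 0, _, a, b => by
    simp only [fusF, Matrix.zero_apply, fusionEntry]
    split_ifs <;> omega
  | 1, _, a, b => by
    simp only [fusF, Matrix.one_apply, fusionEntry, Fin.ext_iff]
    split_ifs <;> omega
  | n + 2, hn, a, b => by
    rw [fusF, Matrix.sub_apply, mul_pathG_apply_of_row_eq (fusF_apply (n + 1) (by omega) a),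
      fusF_apply n (by omega), fusionEntry_add_two hn b.isLt]

def pathEntry (r a b : ℕ) : ℕ := min (min (a + 1) (b + 1)) (min (r - a) (r - b))

lemma sum_Icc_fusionEntry (r a b N : ℕ) :
    ∑ i ∈ Icc 1 N, fusionEntry r i a b =
      ((min (pathEntry r a b) ((N + 1 - (max a b - min a b)) / 2) : ℕ) : ℤ) := by
  induction N with
  | zero =>
    rw [Icc_eq_empty_of_lt zero_lt_one, sum_empty]
    omega
  | succ N ih =>
    rw [sum_Icc_succ_top (show 1 ≤ N + 1 by omega), ih]
    simp only [pathEntry, fusionEntry]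
    split_ifs <;> omega

lemma sum_Icc_fusionEntry_self (r a b : ℕ) :
    ∑ i ∈ Icc 1 r, fusionEntry r i a b = pathEntry r a b := by
  rw [sum_Icc_fusionEntry, pathEntry]
  omega

lemma sum_fusF_apply {r : ℕ} (a b : Fin r) :
    (∑ i ∈ Icc 1 r, fusF r i) a b = pathEntry r a b := by
  rw [Matrix.sum_apply, sum_congr rfl fun i hi => fusF_apply i (mem_Icc.mp hi).2 a b,
    sum_Icc_fusionEntry_self]

theorem superFactorial_eq_prod_pow (n : ℕ) :
    n.superFactorial = ∏ t ∈ Icc 1 n, t ^ (n + 1 - t) := by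
  induction n with
  | zero => rfl
  | succ n ih =>
    have hexp : ∀ t ∈ Icc 1 (n + 1), t ^ (n + 1 + 1 - t) = t * t ^ (n + 1 - t) := by
      intro t ht
      rw [show n + 1 + 1 - t = n + 1 - t + 1 by have := mem_Icc.mp ht; omega, pow_succ']
    have hfact : ∏ t ∈ Icc 1 (n + 1), t = (n + 1)! := by
      rw [← Ico_add_one_right_eq_Icc, prod_Ico_id_eq_factorial]
    rw [superFactorial_succ, ih, prod_congr rfl hexp, prod_mul_distrib, hfact,
      prod_Icc_succ_top (by omega), Nat.sub_self, pow_zero, mul_one]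

def pathSumEntry (r m n : ℕ) : ℕ :=
  min (min (2 * n + 2) (2 * (r - n))) (min (2 * m + 1) (2 * (r - m) + 1))

lemma card_pathSumEntry_fiber {r t : ℕ} (ht : 2 ≤ t) (htr : t ≤ r) :
    #{p ∈ Ico 1 r ×ˢ range r | pathSumEntry r p.1 p.2 = t} = 2 * (r + 1 - t) := by
  rcases Nat.even_or_odd' t with ⟨s, rfl | rfl⟩
  · have hfiber : {p ∈ Ico 1 r ×ˢ range r | pathSumEntry r p.1 p.2 = 2 * s} =
        Icc s (r - s) ×ˢ {s - 1, r - s} := by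
      ext ⟨m, n⟩
      rw [mem_filter]
      simp only [pathSumEntry, mem_product, mem_Ico, mem_range, mem_Icc, mem_insert,
        mem_singleton]
      omega
    rw [hfiber, card_product, Nat.card_Icc, card_pair (by omega)]
    omega
  · have hfiber : {p ∈ Ico 1 r ×ˢ range r | pathSumEntry r p.1 p.2 = 2 * s + 1} =
        {s, r - s} ×ˢ Icc s (r - s - 1) := by
      ext ⟨m, n⟩
      rw [mem_filter]
      simp only [pathSumEntry, mem_product, mem_Ico, mem_range, mem_Icc, mem_insert,
        mem_singleton]
      omega
    rw [hfiber, card_product, Nat.card_Icc, card_pair (by omega)]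
    omega

lemma prod_pathSumEntry (r : ℕ) :
    ∏ m ∈ Ico 1 r, ∏ n ∈ range r, pathSumEntry r m n = r.superFactorial ^ 2 := by
  have hmaps : ∀ p ∈ Ico 1 r ×ˢ range r, pathSumEntry r p.1 p.2 ∈ Icc 1 r := by
    simp only [pathSumEntry, mem_product, mem_Ico, mem_range, mem_Icc]
    omega
  have hfibers : ∀ t ∈ Icc 1 r,
      t ^ #{p ∈ Ico 1 r ×ˢ range r | pathSumEntry r p.1 p.2 = t} = t ^ (2 * (r + 1 - t)) := by
    intro t ht
    obtain rfl | ht2 := (mem_Icc.mp ht).1.eq_or_lt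
    · simp only [one_pow]
    · rw [card_pathSumEntry_fiber ht2 (mem_Icc.mp ht).2]
  rw [← prod_product', ← prod_fiberwise_of_maps_to' hmaps (fun t => t)]
  simp only [prod_const]
  rw [prod_congr rfl hfibers, superFactorial_eq_prod_pow, ← prod_pow]
  exact prod_congr rfl fun t _ => by rw [← pow_mul, mul_comm]

lemma pathEntry_zero_add_pathEntry_sub_one_self {r n : ℕ} (hn : n < r) :
    pathEntry r 0 n + pathEntry r (r - 1) n = 2 := by
  simp only [pathEntry]
  omega

lemma pathEntry_add_pathEntry_sub_one {r m n : ℕ} (hm : 0 < m) (hmr : m ≤ r) :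
    pathEntry r m n + pathEntry r (m - 1) n = pathSumEntry r m n := by
  simp only [pathEntry, pathSumEntry]
  omega

lemma add_sub_one_mod_self {r m : ℕ} (hm : 0 < m) (hmr : m < r) : (m + r - 1) % r = m - 1 := by
  rw [show m + r - 1 = m - 1 + r by omega, add_mod_right, mod_eq_of_lt (by omega)]

theorem prod_pathEntry_add_rotate {r : ℕ} (hr : 1 ≤ r) :
    ∏ m : Fin r, ∏ n : Fin r, (pathEntry r m n + pathEntry r ((m + r - 1) % r) n) =
      2 ^ r * r.superFactorial ^ 2 := by
  have hrow0 : ∏ n ∈ range r, (pathEntry r 0 n + pathEntry r ((0 + r - 1) % r) n) = 2 ^ r := by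
    rw [zero_add, mod_eq_of_lt (by omega),
      prod_congr rfl fun n hn => pathEntry_zero_add_pathEntry_sub_one_self (mem_range.mp hn),
      prod_const, card_range]
  have hrows : ∀ m ∈ Ico 1 r,
      ∏ n ∈ range r, (pathEntry r m n + pathEntry r ((m + r - 1) % r) n) =
        ∏ n ∈ range r, pathSumEntry r m n := by
    intro m hm
    obtain ⟨hm0, hmr⟩ := mem_Ico.mp hm
    rw [add_sub_one_mod_self hm0 hmr]
    exact prod_congr rfl fun n _ => pathEntry_add_pathEntry_sub_one hm0 hmr.le
  rw [← prod_range fun m => ∏ n : Fin r, (pathEntry r m n + pathEntry r ((m + r - 1) % r) n)]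
  rw [prod_congr rfl fun m _ => Fin.prod_univ_eq_prod_range
      (fun n => pathEntry r m n + pathEntry r ((m + r - 1) % r) n) r,
    range_eq_Ico, prod_eq_prod_Ico_succ_bot hr, ← range_eq_Ico, hrow0, prod_congr rfl hrows,
    prod_pathSumEntry]

/-- Path matrix identity for `A_r`: let `X = ∑_{n=1}^r F_n` and let `X↻` be
obtained from `X` by cyclically permuting its rows (row `m` of `X↻` is row
`m−1` of `X`, row `1` of `X↻` being row `r` of `X`; in `0`-based indexing, row
`m` of `X↻` is row `(m+r−1) mod r` of `X`). Then
`∏_{m,n} (X + X↻)_{m,n} = 2^r · sf(r)²` with `sf(r) = ∏_{s=1}^r s!`. -/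
theorem pathMatrix_identity_Ar (r : ℕ) (hr : 1 ≤ r) :
    ∏ m : Fin r, ∏ n : Fin r,
      ((∑ i ∈ Finset.Icc 1 r, fusF r i) m n +
        (∑ i ∈ Finset.Icc 1 r, fusF r i)
          ⟨((m : ℕ) + r - 1) % r, Nat.mod_lt _ (by omega)⟩ n)
    = 2 ^ r * ((∏ s ∈ Finset.Icc 1 r, Nat.factorial s : ℕ) : ℤ) ^ 2 := by
  simp only [sum_fusF_apply, prod_Icc_factorial]
  exact_mod_cast prod_pathEntry_add_rotate hr
end
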